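/- arXiv:1605.03647 — 2 statements merged into one kernel-verified Lean document; each statement's English description precedes it below -/
import Mathlib

section
/- Let U = [U₁, U₂] ∈ ℝ^{M×M} be an orthogonal matrix with L̄·U₁ = 0 and U₂ = Eᵀ·V₂·Γ^{−1/2}, and let F = diag(0, Γ) ∈ ℝ^{M×M} (zero block of size M−N+1). Then U·F·Uᵀ = L_e, i.e., F = Uᵀ·L_e·U. -/
/-!
Since `L = E Eᵀ` satisfies `L L† L = L`, one has `L L† E = E`, so `ker L̄ ⊆ ker E`: the block
`U₁` is killed by `E`. The other block is sent by `E` to `E Eᵀ V₂ Γ^{-1/2} = V₂ Γ^{1/2}`. Hence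
`Uᵀ L_e U = (E U)ᵀ (E U) = diag(0, Γ^{1/2} V₂ᵀ V₂ Γ^{1/2}) = F`, and conjugating back with the
orthogonal `U` gives `U F Uᵀ = L_e`.
-/

open Matrix

namespace Matrix

variable {R m n p : Type*} [Field R] [PartialOrder R] [StarRing R] [StarOrderedRing R]
  [Fintype m] [Fintype n] [DecidableEq m]

theorem mul_conjTranspose_mul_mul_eq_self {A : Matrix m n R} {X : Matrix m m R}
    (h : A * Aᴴ * X * (A * Aᴴ) = A * Aᴴ) : A * Aᴴ * X * A = A := by
  have hzero : (1 - A * Aᴴ * X) * A = 0 :=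
    (mul_self_mul_conjTranspose_eq_zero A _).mp <| by
      rw [Matrix.sub_mul, Matrix.one_mul, h, sub_self]
  rw [Matrix.sub_mul, Matrix.one_mul, sub_eq_zero] at hzero
  exact hzero.symm

theorem mul_eq_zero_of_conjTranspose_mul_mul_eq_zero {A : Matrix m n R} {X : Matrix m m R}
    {Y : Matrix n p R} (h : A * Aᴴ * X * (A * Aᴴ) = A * Aᴴ) (hY : Aᴴ * X * A * Y = 0) :
    A * Y = 0 := by
  rw [← mul_conjTranspose_mul_mul_eq_self h]
  simp only [Matrix.mul_assoc] at hY ⊢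
  rw [hY, Matrix.mul_zero]

end Matrix

theorem UFUt_eq_Le_general
    (N M : ℕ) (E : Matrix (Fin N) (Fin M) ℝ)
    (Ld : Matrix (Fin N) (Fin N) ℝ)
    (hp1 : (E * Eᵀ) * Ld * (E * Eᵀ) = E * Eᵀ)
    (γ : Fin (N - 1) → ℝ) (hγ : ∀ k, 0 < γ k)
    (V₂ : Matrix (Fin N) (Fin (N - 1)) ℝ)
    (hV₂ : V₂ᵀ * V₂ = 1)
    (hLV₂ : (E * Eᵀ) * V₂ = V₂ * Matrix.diagonal γ)
    (S : Matrix (Fin (N - 1)) (Fin (N - 1)) ℝ)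
    (hS : S = Matrix.diagonal fun k => (Real.sqrt (γ k))⁻¹)
    (U₁ : Matrix (Fin M) (Fin (M - N + 1)) ℝ)
    (hU₁ : (Eᵀ * Ld * E) * U₁ = 0)
    (U : Matrix (Fin M) (Fin (M - N + 1) ⊕ Fin (N - 1)) ℝ)
    (hU : U = Matrix.fromCols U₁ (Eᵀ * V₂ * S))
    -- U is an orthogonal matrix
    (hUorth' : U * Uᵀ = 1)
    (F : Matrix (Fin (M - N + 1) ⊕ Fin (N - 1)) (Fin (M - N + 1) ⊕ Fin (N - 1)) ℝ)
    (hF : F = Matrix.fromBlocks 0 0 0 (Matrix.diagonal γ)) :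
    U * F * Uᵀ = Eᵀ * E ∧ F = Uᵀ * (Eᵀ * E) * U := by
  set D : Matrix (Fin (N - 1)) (Fin (N - 1)) ℝ := diagonal fun k => √(γ k)
  have hEU₁ : E * U₁ = 0 := mul_eq_zero_of_conjTranspose_mul_mul_eq_zero (by simpa using hp1)
    (by simpa using hU₁)
  have hEU : E * U = fromCols 0 (V₂ * D) := by
    rw [hU, mul_fromCols, hEU₁, ← Matrix.mul_assoc, ← Matrix.mul_assoc, hLV₂, hS,
      Matrix.mul_assoc, diagonal_mul_diagonal]
    simp only [← div_eq_mul_inv, Real.div_sqrt, D]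
  have hV₂D : (V₂ * D)ᵀ * (V₂ * D) = diagonal γ := by
    rw [transpose_mul, Matrix.mul_assoc, ← Matrix.mul_assoc V₂ᵀ, hV₂, Matrix.one_mul,
      diagonal_transpose, diagonal_mul_diagonal]
    simp only [Real.mul_self_sqrt (hγ _).le]
  have hF' : F = Uᵀ * (Eᵀ * E) * U := by
    rw [← Matrix.mul_assoc, ← transpose_mul, Matrix.mul_assoc, hEU, transpose_fromCols,
      fromRows_mul_fromCols, hV₂D, hF]
    simp
  refine ⟨?_, hF'⟩
  rw [hF', ← Matrix.mul_assoc, ← Matrix.mul_assoc, hUorth', Matrix.one_mul, Matrix.mul_assoc,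
    hUorth', Matrix.mul_one]

/-- For the orthogonal matrix `U = [U₁, U₂]` with `L̄·U₁ = 0` and
`U₂ = Eᵀ·V₂·Γ^{−1/2}`, and `F = diag(0, Γ)`, one has `U·F·Uᵀ = L_e` and
`F = Uᵀ·L_e·U`. -/
theorem UFUt_eq_Le
    (N M : ℕ) (E : Matrix (Fin N) (Fin M) ℝ)
    (hInc : ∀ j : Fin M, ∃ a b : Fin N, a ≠ b ∧ E a j = 1 ∧ E b j = -1 ∧
      ∀ i : Fin N, i ≠ a → i ≠ b → E i j = 0)
    (hConn : ∀ v : Fin N → ℝ, Eᵀ *ᵥ v = 0 → ∃ c : ℝ, ∀ i, v i = c)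
    (Ld : Matrix (Fin N) (Fin N) ℝ)
    (hp1 : (E * Eᵀ) * Ld * (E * Eᵀ) = E * Eᵀ)
    (hp2 : Ld * (E * Eᵀ) * Ld = Ld)
    (hp3 : ((E * Eᵀ) * Ld)ᵀ = (E * Eᵀ) * Ld)
    (hp4 : (Ld * (E * Eᵀ))ᵀ = Ld * (E * Eᵀ))
    (γ : Fin (N - 1) → ℝ) (hγ : ∀ k, 0 < γ k)
    (V₂ : Matrix (Fin N) (Fin (N - 1)) ℝ)
    (hV₂ : V₂ᵀ * V₂ = 1)
    (hLV₂ : (E * Eᵀ) * V₂ = V₂ * Matrix.diagonal γ)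
    (S : Matrix (Fin (N - 1)) (Fin (N - 1)) ℝ)
    (hS : S = Matrix.diagonal fun k => (Real.sqrt (γ k))⁻¹)
    (U₁ : Matrix (Fin M) (Fin (M - N + 1)) ℝ)
    (hU₁ : (Eᵀ * Ld * E) * U₁ = 0)
    (U : Matrix (Fin M) (Fin (M - N + 1) ⊕ Fin (N - 1)) ℝ)
    (hU : U = Matrix.fromCols U₁ (Eᵀ * V₂ * S))
    -- U is an orthogonal matrix
    (hUorth : Uᵀ * U = 1) (hUorth' : U * Uᵀ = 1)
    (F : Matrix (Fin (M - N + 1) ⊕ Fin (N - 1)) (Fin (M - N + 1) ⊕ Fin (N - 1)) ℝ)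
    (hF : F = Matrix.fromBlocks 0 0 0 (Matrix.diagonal γ)) :
    U * F * Uᵀ = Eᵀ * E ∧ F = Uᵀ * (Eᵀ * E) * U :=
  UFUt_eq_Le_general N M E Ld hp1 γ hγ V₂ hV₂ hLV₂ S hS U₁ hU₁ U hU hUorth' F hF
end

section
/- Let P ≻ 0 and ε > 0, and suppose that the block matrix [[P̃Ã + ÃᵀP̃ + εP̃ − I_{N−1} ⊗ (Ψσ₁σ₂), P̃B̃ + ½U₂ᵀ ⊗ (Ψ(σ₁+σ₂))], [(·)ᵀ, −I_M ⊗ Ψ]] ⪯ 0, where P̃ = I_{N−1} ⊗ P, Ã = I_{N−1} ⊗ A, B̃ = (Γ·U₂ᵀ) ⊗ (BK). Then along any trajectory of the Lur'e network ż̃₂ = Ãz̃₂ + B̃v, z = (U₂ ⊗ I_n)z̃₂, v = Φ(z) with Φ satisfying the componentwise sector condition with bounds σ₁ < σ₂, the Lyapunov function V(z̃₂) = z̃₂ᵀP̃z̃₂ satisfies V̇ + εV ≤ 0, and hence V(z̃₂(t)) ≤ e^{−εt}V(z̃₂(0)), so z̃₂(t) → 0 exponentially. -/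
open Matrix Kronecker Filter

/-!
Write `ζ = (U₂ ⊗ Iₙ) z̃₂` and `w = Φ(ζ)`. The sector condition, weighted by `Ψ`, gives the
S-procedure inequality `wᵀ(I ⊗ Ψ)w − (σ₁ + σ₂) ζᵀ(I ⊗ Ψ)w + σ₁σ₂ ζᵀ(I ⊗ Ψ)ζ ≤ 0`, and because
`U₂ᵀU₂ = I` its terms in `ζ` are exactly the `Ψ`-terms of the LMI evaluated at `(z̃₂, w)`. So
`V̇ + εV` is the (nonpositive) LMI quadratic form at `(z̃₂, w)` plus this nonpositive term.
Then `e^{εt} V(t)` is antitone, and `P̃ ≻ 0` gives `c ‖z̃₂‖² ≤ V` for some `c > 0`, whence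
`z̃₂ → 0` exponentially.
-/

section Algebra

variable {ι κ μ : Type*}

lemma mulVec_dotProduct [Fintype ι] [Fintype κ] {R : Type*} [CommSemiring R] (X : Matrix ι κ R)
    (a : κ → R) (b : ι → R) : (X *ᵥ a) ⬝ᵥ b = a ⬝ᵥ (Xᵀ *ᵥ b) :=
  ((dotProduct_transpose_mulVec X a b).trans (dotProduct_comm _ _)).symm

lemma one_kronecker_diagonal [DecidableEq ι] [DecidableEq κ] {R : Type*} [MulZeroOneClass R]
    (d : κ → R) :
    (1 : Matrix ι ι R) ⊗ₖ diagonal d = diagonal fun p => d p.2 := by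
  rw [← diagonal_one, diagonal_kronecker_diagonal]
  simp only [one_mul]

lemma kronecker_one_transpose_mul_one_kronecker [Fintype κ] [Fintype μ] [DecidableEq κ]
    [DecidableEq μ] {R : Type*} [CommSemiring R]
    (U : Matrix μ ι R) (Q : Matrix κ κ R) :
    (U ⊗ₖ (1 : Matrix κ κ R))ᵀ * ((1 : Matrix μ μ R) ⊗ₖ Q) = Uᵀ ⊗ₖ Q := by
  rw [← kroneckerMap_transpose, transpose_one, ← mul_kronecker_mul, Matrix.mul_one,
    Matrix.one_mul]

lemma quadForm_fromBlocks_nonpos [Fintype ι] [Fintype κ] {M₁₁ : Matrix ι ι ℝ}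
    {M₁₂ : Matrix ι κ ℝ} {M₂₂ : Matrix κ κ ℝ}
    (h : (-fromBlocks M₁₁ M₁₂ M₁₂ᵀ M₂₂).PosSemidef) (z : ι → ℝ) (w : κ → ℝ) :
    z ⬝ᵥ (M₁₁ *ᵥ z) + 2 * (z ⬝ᵥ (M₁₂ *ᵥ w)) + w ⬝ᵥ (M₂₂ *ᵥ w) ≤ 0 := by
  have := h.dotProduct_mulVec_nonneg (Sum.elim z w)
  rw [star_trivial, neg_mulVec, dotProduct_neg, fromBlocks_mulVec,
    sumElim_dotProduct_sumElim] at this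
  simp only [Sum.elim_comp_inl, Sum.elim_comp_inr, dotProduct_add,
    dotProduct_transpose_mulVec] at this
  linarith

lemma sector_quadForm_nonpos [Fintype ι] [DecidableEq ι] {ψ : ι → ℝ} (hψ : ∀ i, 0 ≤ ψ i)
    {σ₁ σ₂ : ℝ} {ζ w : ι → ℝ}
    (hw : ∀ i, (w i - σ₁ * ζ i) * (w i - σ₂ * ζ i) ≤ 0) :
    w ⬝ᵥ (diagonal ψ *ᵥ w) - (σ₁ + σ₂) * (ζ ⬝ᵥ (diagonal ψ *ᵥ w))
      + σ₁ * σ₂ * (ζ ⬝ᵥ (diagonal ψ *ᵥ ζ)) ≤ 0 := by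
  have hsum : w ⬝ᵥ (diagonal ψ *ᵥ w) - (σ₁ + σ₂) * (ζ ⬝ᵥ (diagonal ψ *ᵥ w))
      + σ₁ * σ₂ * (ζ ⬝ᵥ (diagonal ψ *ᵥ ζ))
      = ∑ i, ψ i * ((w i - σ₁ * ζ i) * (w i - σ₂ * ζ i)) := by
    simp only [dotProduct, mulVec_diagonal, Finset.mul_sum, ← Finset.sum_sub_distrib,
      ← Finset.sum_add_distrib]
    exact Finset.sum_congr rfl fun i _ => by ring
  rw [hsum]
  exact Finset.sum_nonpos fun i _ => mul_nonpos_of_nonneg_of_nonpos (hψ i) (hw i)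

lemma lure_dissipation_inequality [Fintype ι] [Fintype κ] [Fintype μ] [DecidableEq ι]
    [DecidableEq κ] [DecidableEq μ] {U : Matrix μ ι ℝ} (hU : Uᵀ * U = 1) {ψ : κ → ℝ}
    (hψ : ∀ k, 0 ≤ ψ k) {σ₁ σ₂ ε : ℝ} {Pt At : Matrix (ι × κ) (ι × κ) ℝ} (hPt : Ptᵀ = Pt)
    {Bt : Matrix (ι × κ) (μ × κ) ℝ}
    (hLMI : (-(fromBlocks
        (Pt * At + Atᵀ * Pt + ε • Pt - (1 : Matrix ι ι ℝ) ⊗ₖ ((σ₁ * σ₂) • diagonal ψ))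
        (Pt * Bt + (2⁻¹ : ℝ) • (Uᵀ ⊗ₖ ((σ₁ + σ₂) • diagonal ψ)))
        (Pt * Bt + (2⁻¹ : ℝ) • (Uᵀ ⊗ₖ ((σ₁ + σ₂) • diagonal ψ)))ᵀ
        (-((1 : Matrix μ μ ℝ) ⊗ₖ diagonal ψ)))).PosSemidef)
    (z : ι × κ → ℝ) (w : μ × κ → ℝ)
    (hw : ∀ p, (w p - σ₁ * ((U ⊗ₖ 1) *ᵥ z) p) * (w p - σ₂ * ((U ⊗ₖ 1) *ᵥ z) p) ≤ 0) :
    (At *ᵥ z + Bt *ᵥ w) ⬝ᵥ (Pt *ᵥ z) + z ⬝ᵥ (Pt *ᵥ (At *ᵥ z + Bt *ᵥ w))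
      + ε * (z ⬝ᵥ (Pt *ᵥ z)) ≤ 0 := by
  set G : Matrix (μ × κ) (ι × κ) ℝ := U ⊗ₖ 1
  have hGT : Gᵀ * ((1 : Matrix μ μ ℝ) ⊗ₖ diagonal ψ) = Uᵀ ⊗ₖ diagonal ψ :=
    kronecker_one_transpose_mul_one_kronecker U _
  have hGTG : Gᵀ * ((1 : Matrix μ μ ℝ) ⊗ₖ diagonal ψ) * G = 1 ⊗ₖ diagonal ψ := by
    rw [hGT, ← mul_kronecker_mul, hU, Matrix.mul_one]
  have hζζ : (G *ᵥ z) ⬝ᵥ (((1 : Matrix μ μ ℝ) ⊗ₖ diagonal ψ) *ᵥ (G *ᵥ z))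
      = z ⬝ᵥ (((1 : Matrix ι ι ℝ) ⊗ₖ diagonal ψ) *ᵥ z) := by
    rw [mulVec_dotProduct, mulVec_mulVec, mulVec_mulVec, hGTG]
  have hζw : (G *ᵥ z) ⬝ᵥ (((1 : Matrix μ μ ℝ) ⊗ₖ diagonal ψ) *ᵥ w)
      = z ⬝ᵥ ((Uᵀ ⊗ₖ diagonal ψ) *ᵥ w) := by
    rw [mulVec_dotProduct, mulVec_mulVec, hGT]
  have hsector := sector_quadForm_nonpos (ψ := fun p : μ × κ => ψ p.2) (fun p => hψ p.2) hw
  rw [← one_kronecker_diagonal, hζζ, hζw] at hsector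
  have hPsymm : (Bt *ᵥ w) ⬝ᵥ (Pt *ᵥ z) = z ⬝ᵥ (Pt *ᵥ (Bt *ᵥ w)) := by
    rw [dotProduct_comm, mulVec_dotProduct, hPt]
  have hAsymm : (At *ᵥ z) ⬝ᵥ (Pt *ᵥ z) = z ⬝ᵥ (Atᵀ *ᵥ (Pt *ᵥ z)) := mulVec_dotProduct _ _ _
  have hblock := quadForm_fromBlocks_nonpos hLMI z w
  simp only [sub_mulVec, add_mulVec, smul_mulVec, neg_mulVec, kronecker_smul, dotProduct_sub,
    dotProduct_add, dotProduct_smul, dotProduct_neg, smul_eq_mul, ← mulVec_mulVec] at hblock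
  rw [add_dotProduct, mulVec_add, dotProduct_add, hPsymm, hAsymm]
  linarith

end Algebra

section Calculus

variable {ι κ : Type*}

lemma HasDerivAt.dotProduct [Fintype ι] {x y : ℝ → ι → ℝ} {x' y' : ι → ℝ} {t : ℝ}
    (hx : HasDerivAt x x' t) (hy : HasDerivAt y y' t) :
    HasDerivAt (fun s => x s ⬝ᵥ y s) (x' ⬝ᵥ y t + x t ⬝ᵥ y') t :=
  (HasDerivAt.fun_sum (u := Finset.univ) fun i _ =>
    (hasDerivAt_pi.mp hx i).mul (hasDerivAt_pi.mp hy i)).congr_deriv Finset.sum_add_distrib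

lemma HasDerivAt.mulVec [Fintype ι] (Q : Matrix κ ι ℝ) {x : ℝ → ι → ℝ} {x' : ι → ℝ} {t : ℝ}
    (hx : HasDerivAt x x' t) : HasDerivAt (fun s => Q *ᵥ x s) (Q *ᵥ x') t :=
  hasDerivAt_pi.mpr fun i =>
    ((hasDerivAt_const t (Q i)).dotProduct hx).congr_deriv (by rw [zero_dotProduct, zero_add]; rfl)

lemma antitone_exp_mul_of_deriv_add_mul_nonpos {V : ℝ → ℝ} (hV : Differentiable ℝ V) {ε : ℝ}
    (h : ∀ t, deriv V t + ε * V t ≤ 0) : Antitone fun t => Real.exp (ε * t) * V t := by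
  have hderiv : ∀ t, HasDerivAt (fun s => Real.exp (ε * s) * V s)
      (Real.exp (ε * t) * (deriv V t + ε * V t)) t := fun t => by
    refine ((((hasDerivAt_id t).const_mul ε).exp).mul (hV t).hasDerivAt).congr_deriv ?_
    simp only [id, mul_one]
    ring
  refine antitone_of_deriv_nonpos (fun t => (hderiv t).differentiableAt) fun t => ?_
  rw [(hderiv t).deriv]
  exact mul_nonpos_of_nonneg_of_nonpos (Real.exp_nonneg _) (h t)

lemma le_exp_neg_mul_of_deriv_add_mul_nonpos {V : ℝ → ℝ} (hV : Differentiable ℝ V) {ε : ℝ}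
    (h : ∀ t, deriv V t + ε * V t ≤ 0) {t : ℝ} (ht : 0 ≤ t) :
    V t ≤ Real.exp (-ε * t) * V 0 := by
  have := antitone_exp_mul_of_deriv_add_mul_nonpos hV h ht
  simp only [mul_zero, Real.exp_zero, one_mul] at this
  calc V t = Real.exp (-ε * t) * (Real.exp (ε * t) * V t) := by
        rw [← mul_assoc, ← Real.exp_add]; simp
    _ ≤ Real.exp (-ε * t) * V 0 := mul_le_mul_of_nonneg_left this (Real.exp_nonneg _)

lemma Matrix.PosDef.exists_pos_mul_norm_sq_le [Fintype ι] {Q : Matrix ι ι ℝ} (hQ : Q.PosDef) :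
    ∃ c > 0, ∀ x : ι → ℝ, c * ‖x‖ ^ 2 ≤ x ⬝ᵥ (Q *ᵥ x) := by
  rcases isEmpty_or_nonempty ι with hι | hι
  · exact ⟨1, one_pos, fun x => by simp [Subsingleton.elim x 0]⟩
  have hcont : Continuous fun x : ι → ℝ => x ⬝ᵥ (Q *ᵥ x) := by fun_prop
  obtain ⟨x₀, hx₀, hmin⟩ := (isCompact_sphere (0 : ι → ℝ) 1).exists_isMinOn
    (NormedSpace.sphere_nonempty.mpr zero_le_one) hcont.continuousOn
  have hx₀ne : x₀ ≠ 0 := ne_zero_of_mem_unit_sphere ⟨x₀, hx₀⟩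
  refine ⟨x₀ ⬝ᵥ (Q *ᵥ x₀), hQ.dotProduct_mulVec_pos hx₀ne, fun x => ?_⟩
  rcases eq_or_ne x 0 with rfl | hx
  · simp
  have hnorm : 0 < ‖x‖ := norm_pos_iff.mpr hx
  have hunit : ‖x‖⁻¹ • x ∈ Metric.sphere (0 : ι → ℝ) 1 := by
    simp [norm_smul, inv_mul_cancel₀ hnorm.ne']
  have := hmin hunit
  simp only [Set.mem_ofPred_eq, mulVec_smul, dotProduct_smul, smul_dotProduct, smul_eq_mul] at this
  calc x₀ ⬝ᵥ (Q *ᵥ x₀) * ‖x‖ ^ 2 ≤ ‖x‖⁻¹ * (‖x‖⁻¹ * x ⬝ᵥ (Q *ᵥ x)) * ‖x‖ ^ 2 := by gcongr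
    _ = x ⬝ᵥ (Q *ᵥ x) := by field_simp

lemma tendsto_zero_of_mul_norm_sq_le_exp {E : Type*} [NormedAddCommGroup E] {x : ℝ → E}
    {c C ε : ℝ} (hc : 0 < c) (hε : 0 < ε) (hx : ∀ t ≥ 0, c * ‖x t‖ ^ 2 ≤ Real.exp (-ε * t) * C) :
    Tendsto x atTop (nhds 0) := by
  have hexp : Tendsto (fun t => C / c * Real.exp (-ε * t)) atTop (nhds 0) := by
    simpa [neg_mul] using
      (Real.tendsto_exp_neg_atTop_nhds_zero.comp (tendsto_id.const_mul_atTop hε)).const_mul (C / c)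
  have hsq : Tendsto (fun t => ‖x t‖ ^ 2) atTop (nhds 0) := by
    refine squeeze_zero' (.of_forall fun t => by positivity) ?_ hexp
    filter_upwards [eventually_ge_atTop 0] with t ht
    rw [div_mul_eq_mul_div, le_div_iff₀ hc]
    linarith [hx t ht]
  rw [tendsto_zero_iff_norm_tendsto_zero]
  simpa using hsq.sqrt

end Calculus

theorem lure_network_exponential_stability_general
    (n ν M : ℕ)
    (U₂ : Matrix (Fin M) (Fin ν) ℝ) (hU₂ : U₂ᵀ * U₂ = 1)
    (ψ : Fin n → ℝ) (hψ : ∀ k, 0 < ψ k)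
    (σ₁ σ₂ : ℝ)
    (P : Matrix (Fin n) (Fin n) ℝ) (hP : P.PosDef)
    (ε : ℝ) (hε : 0 < ε)
    -- abbreviations
    (Pt : Matrix (Fin ν × Fin n) (Fin ν × Fin n) ℝ)
    (hPt : Pt = (1 : Matrix (Fin ν) (Fin ν) ℝ) ⊗ₖ P)
    (At : Matrix (Fin ν × Fin n) (Fin ν × Fin n) ℝ)
    (Bt : Matrix (Fin ν × Fin n) (Fin M × Fin n) ℝ)
    -- the LMI: the block matrix is negative semidefinite
    (hLMI : (-(Matrix.fromBlocks
        (Pt * At + Atᵀ * Pt + ε • Pt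
          - (1 : Matrix (Fin ν) (Fin ν) ℝ) ⊗ₖ ((σ₁ * σ₂) • Matrix.diagonal ψ))
        (Pt * Bt + (2⁻¹ : ℝ) • (U₂ᵀ ⊗ₖ ((σ₁ + σ₂) • Matrix.diagonal ψ)))
        (Pt * Bt + (2⁻¹ : ℝ) • (U₂ᵀ ⊗ₖ ((σ₁ + σ₂) • Matrix.diagonal ψ)))ᵀ
        (-((1 : Matrix (Fin M) (Fin M) ℝ) ⊗ₖ Matrix.diagonal ψ)))).PosSemidef)
    -- componentwise sector-bounded nonlinearity
    (φ : Fin M → Fin n → ℝ → ℝ)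
    (hsector : ∀ (j : Fin M) (k : Fin n) (s : ℝ),
      (φ j k s - σ₁ * s) * (φ j k s - σ₂ * s) ≤ 0)
    (Φ : (Fin M × Fin n → ℝ) → (Fin M × Fin n → ℝ))
    (hΦ : ∀ (z : Fin M × Fin n → ℝ) (jk : Fin M × Fin n),
      Φ z jk = φ jk.1 jk.2 (z jk))
    -- trajectory of the Lur'e network
    (z2 : ℝ → Fin ν × Fin n → ℝ)
    (v : ℝ → Fin M × Fin n → ℝ)
    (hv : ∀ t, v t = Φ ((U₂ ⊗ₖ (1 : Matrix (Fin n) (Fin n) ℝ)) *ᵥ z2 t))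
    (hdyn : ∀ t, HasDerivAt z2 (At *ᵥ z2 t + Bt *ᵥ v t) t)
    (V : ℝ → ℝ) (hV : ∀ t, V t = z2 t ⬝ᵥ (Pt *ᵥ z2 t)) :
    (∀ t : ℝ, deriv V t + ε * V t ≤ 0) ∧
    (∀ t : ℝ, 0 ≤ t → V t ≤ Real.exp (-ε * t) * V 0) ∧
    Tendsto z2 atTop (nhds 0) := by
  have hPt_posDef : Pt.PosDef := hPt ▸ PosDef.one.kronecker hP
  have hPt_symm : Ptᵀ = Pt := by
    rw [← conjTranspose_eq_transpose_of_trivial]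
    exact hPt_posDef.1.eq
  have hV_deriv : ∀ t, HasDerivAt V ((At *ᵥ z2 t + Bt *ᵥ v t) ⬝ᵥ (Pt *ᵥ z2 t)
      + z2 t ⬝ᵥ (Pt *ᵥ (At *ᵥ z2 t + Bt *ᵥ v t))) t := fun t => by
    rw [funext hV]
    exact (hdyn t).dotProduct ((hdyn t).mulVec Pt)
  have hdecay : ∀ t, deriv V t + ε * V t ≤ 0 := fun t => by
    rw [(hV_deriv t).deriv, hV t]
    refine lure_dissipation_inequality hU₂ (fun k => (hψ k).le) hPt_symm hLMI _ _ fun p => ?_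
    rw [hv t, hΦ]
    exact hsector p.1 p.2 _
  have hV_le : ∀ t : ℝ, 0 ≤ t → V t ≤ Real.exp (-ε * t) * V 0 := fun t =>
    le_exp_neg_mul_of_deriv_add_mul_nonpos (fun t => (hV_deriv t).differentiableAt) hdecay
  obtain ⟨c, hc, hcoercive⟩ := hPt_posDef.exists_pos_mul_norm_sq_le
  refine ⟨hdecay, hV_le, tendsto_zero_of_mul_norm_sq_le_exp (C := V 0) hc hε fun t ht => ?_⟩
  calc c * ‖z2 t‖ ^ 2 ≤ V t := hV t ▸ hcoercive (z2 t)
    _ ≤ Real.exp (-ε * t) * V 0 := hV_le t ht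

/-- If the LMI block matrix built from `P ≻ 0`, `ε > 0` is negative semidefinite,
then along any trajectory of the Lur'e network `ż̃₂ = Ãz̃₂ + B̃v`, `z = (U₂ ⊗ I_n)z̃₂`,
`v = Φ(z)` with componentwise sector-bounded `Φ`, the Lyapunov function
`V(z̃₂) = z̃₂ᵀP̃z̃₂` satisfies `V̇ + εV ≤ 0`, hence `V(z̃₂(t)) ≤ e^{−εt}V(z̃₂(0))` and
`z̃₂(t) → 0` exponentially. -/
theorem lure_network_exponential_stability
    (n m ν M : ℕ)
    (A : Matrix (Fin n) (Fin n) ℝ) (B : Matrix (Fin n) (Fin m) ℝ)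
    (K : Matrix (Fin m) (Fin n) ℝ)
    (γ : Fin ν → ℝ) (hγ : ∀ k, 0 < γ k)
    (U₂ : Matrix (Fin M) (Fin ν) ℝ) (hU₂ : U₂ᵀ * U₂ = 1)
    (ψ : Fin n → ℝ) (hψ : ∀ k, 0 < ψ k)
    (σ₁ σ₂ : ℝ) (hσ : σ₁ < σ₂)
    (P : Matrix (Fin n) (Fin n) ℝ) (hP : P.PosDef)
    (ε : ℝ) (hε : 0 < ε)
    -- abbreviations
    (Pt : Matrix (Fin ν × Fin n) (Fin ν × Fin n) ℝ)
    (hPt : Pt = (1 : Matrix (Fin ν) (Fin ν) ℝ) ⊗ₖ P)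
    (At : Matrix (Fin ν × Fin n) (Fin ν × Fin n) ℝ)
    (hAt : At = (1 : Matrix (Fin ν) (Fin ν) ℝ) ⊗ₖ A)
    (Bt : Matrix (Fin ν × Fin n) (Fin M × Fin n) ℝ)
    (hBt : Bt = (Matrix.diagonal γ * U₂ᵀ) ⊗ₖ (B * K))
    -- the LMI: the block matrix is negative semidefinite
    (hLMI : (-(Matrix.fromBlocks
        (Pt * At + Atᵀ * Pt + ε • Pt
          - (1 : Matrix (Fin ν) (Fin ν) ℝ) ⊗ₖ ((σ₁ * σ₂) • Matrix.diagonal ψ))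
        (Pt * Bt + (2⁻¹ : ℝ) • (U₂ᵀ ⊗ₖ ((σ₁ + σ₂) • Matrix.diagonal ψ)))
        (Pt * Bt + (2⁻¹ : ℝ) • (U₂ᵀ ⊗ₖ ((σ₁ + σ₂) • Matrix.diagonal ψ)))ᵀ
        (-((1 : Matrix (Fin M) (Fin M) ℝ) ⊗ₖ Matrix.diagonal ψ)))).PosSemidef)
    -- componentwise sector-bounded nonlinearity
    (φ : Fin M → Fin n → ℝ → ℝ)
    (hsector : ∀ (j : Fin M) (k : Fin n) (s : ℝ),
      (φ j k s - σ₁ * s) * (φ j k s - σ₂ * s) ≤ 0)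
    (Φ : (Fin M × Fin n → ℝ) → (Fin M × Fin n → ℝ))
    (hΦ : ∀ (z : Fin M × Fin n → ℝ) (jk : Fin M × Fin n),
      Φ z jk = φ jk.1 jk.2 (z jk))
    -- trajectory of the Lur'e network
    (z2 : ℝ → Fin ν × Fin n → ℝ)
    (v : ℝ → Fin M × Fin n → ℝ)
    (hv : ∀ t, v t = Φ ((U₂ ⊗ₖ (1 : Matrix (Fin n) (Fin n) ℝ)) *ᵥ z2 t))
    (hdyn : ∀ t, HasDerivAt z2 (At *ᵥ z2 t + Bt *ᵥ v t) t)
    (V : ℝ → ℝ) (hV : ∀ t, V t = z2 t ⬝ᵥ (Pt *ᵥ z2 t)) :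
    (∀ t : ℝ, deriv V t + ε * V t ≤ 0) ∧
    (∀ t : ℝ, 0 ≤ t → V t ≤ Real.exp (-ε * t) * V 0) ∧
    Tendsto z2 atTop (nhds 0) :=
  lure_network_exponential_stability_general n ν M U₂ hU₂ ψ hψ σ₁ σ₂ P hP ε hε Pt hPt At Bt hLMI φ
    hsector Φ hΦ z2 v hv hdyn V hV
end
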